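/- For u ∈ ℝ^{N/2^ℓ - 1} with ‖u‖_∞ ≤ 1, there exists ũ ∈ ℝ^{N/2^{ℓ-1} - 1} with ‖ũ‖_∞ ≤ 1 such that ⟨u, Dy^{(ℓ)}⟩ = ⟨ũ, Dy^{(ℓ-1)}⟩, where y^{(ℓ)}_i = (y^{(ℓ-1)}_{2i-1} + y^{(ℓ-1)}_{2i})/2 for any y^{(ℓ-1)} ∈ ℝ^{N/2^{ℓ-1}}. Consequently ‖Dy^{(ℓ)}‖₁ ≤ ‖Dy^{(ℓ-1)}‖₁. -/
import Mathlib


open Finset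

/-- Finite difference operator: `(Df x) i = x (i+1) - x i`. -/
noncomputable def Df {N : ℕ} (x : Fin N → ℝ) : Fin (N - 1) → ℝ :=
  fun i => x ⟨i.val + 1, by have := i.isLt; omega⟩ - x ⟨i.val, by have := i.isLt; omega⟩

noncomputable def l1 {m : ℕ} (v : Fin m → ℝ) : ℝ := ∑ i, |v i|

private lemma sum_range_two_mul' (n : ℕ) (f : ℕ → ℝ) :
    ∑ j ∈ Finset.range (2*n), f j = ∑ i ∈ Finset.range n, (f (2*i) + f (2*i+1)) := by
  induction n with
  | zero => simp
  | succ k ih =>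
      rw [Finset.sum_range_succ, ← ih, show 2*(k+1) = (2*k+1)+1 by ring,
        Finset.sum_range_succ, Finset.sum_range_succ]
      ring


/-- One level of Haar averaging `y2 i = (y1 (2i) + y1 (2i+1))/2`: for every `u` with
`‖u‖_∞ ≤ 1` there is `ũ` with `‖ũ‖_∞ ≤ 1` and `⟨u, D y2⟩ = ⟨ũ, D y1⟩`; consequently
`‖D y2‖₁ ≤ ‖D y1‖₁`. -/
theorem stmt18 (m : ℕ) (y1 : Fin (2 * m) → ℝ) (y2 : Fin m → ℝ)
    (h : ∀ i : Fin m, y2 i =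
      (y1 ⟨2 * i.val, by have := i.isLt; omega⟩ +
       y1 ⟨2 * i.val + 1, by have := i.isLt; omega⟩) / 2) :
    (∀ u : Fin (m - 1) → ℝ, (∀ i, |u i| ≤ 1) →
      ∃ utilde : Fin (2 * m - 1) → ℝ, (∀ i, |utilde i| ≤ 1) ∧
        ∑ i, u i * Df y2 i = ∑ i, utilde i * Df y1 i) ∧
    l1 (Df y2) ≤ l1 (Df y1) := by
  have key : ∀ u : Fin (m - 1) → ℝ, (∀ i, |u i| ≤ 1) →
      ∃ utilde : Fin (2 * m - 1) → ℝ, (∀ i, |utilde i| ≤ 1) ∧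
        ∑ i, u i * Df y2 i = ∑ i, utilde i * Df y1 i := by
    intro u hu
    rcases Nat.eq_zero_or_pos m with hm | hm
    · subst hm
      refine ⟨fun _ => 0, fun i => by simp, by simp⟩
    -- ℕ-indexed versions
    set U : ℕ → ℝ := fun i => if hi : i < m - 1 then u ⟨i, hi⟩ else 0 with hUdef
    set D1 : ℕ → ℝ := fun j => if hj : j < 2*m - 1 then Df y1 ⟨j, hj⟩ else 0 with hD1def
    have hUb : ∀ i, |U i| ≤ 1 := by
      intro i; simp only [hUdef]; split
      · exact hu _
      · simp
    set ut : ℕ → ℝ := fun j => if j % 2 = 1 then U (j/2)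
        else ((if j = 0 then 0 else U (j/2 - 1)) + U (j/2))/2 with hutdef
    have hutb : ∀ j, |ut j| ≤ 1 := by
      intro j; simp only [hutdef]; split
      · exact hUb _
      · have hc : |(if j = 0 then (0:ℝ) else U (j/2 - 1))| ≤ 1 := by
          split
          · simp
          · exact hUb _
        have h2 := hUb (j/2)
        have habs := abs_add_le (if j = 0 then (0:ℝ) else U (j/2 - 1)) (U (j/2))
        rw [abs_div, abs_two]
        linarith
    have hY : ∀ (a : ℕ) (ha : a < 2*m), y1 ⟨a, ha⟩ =
        (fun b => if hb : b < 2*m then y1 ⟨b, hb⟩ else 0) a := by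
      intro a ha; simp [ha]
    set Y : ℕ → ℝ := fun b => if hb : b < 2*m then y1 ⟨b, hb⟩ else 0 with hYdef
    -- D1 in terms of Y
    have hD1Y : ∀ j, j < 2*m - 1 → D1 j = Y (j+1) - Y j := by
      intro j hj
      simp only [hD1def, dif_pos hj, Df]
      rw [hY _ (by omega), hY _ (by omega)]
    -- per-term identity for the left sum
    have hterm : ∀ i : Fin (m - 1), u i * Df y2 i
        = U i.val * (D1 (2*i.val)/2 + D1 (2*i.val+1) + D1 (2*i.val+2)/2) := by
      intro i
      have hiv : i.val < m - 1 := i.isLt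
      have hu' : U i.val = u i := by simp [hUdef, hiv]
      rw [hu', hD1Y _ (by omega), hD1Y _ (by omega), hD1Y _ (by omega)]
      have hDf : Df y2 i = (Y (2*i.val+2) + Y (2*i.val+3))/2 - (Y (2*i.val) + Y (2*i.val+1))/2 := by
        show y2 ⟨i.val+1, _⟩ - y2 ⟨i.val, _⟩ = _
        rw [h ⟨i.val+1, by omega⟩, h ⟨i.val, by omega⟩]
        simp only []
        rw [hY _ (by omega), hY _ (by omega), hY _ (by omega), hY _ (by omega)]
        rw [show 2*(i.val+1) = 2*i.val+2 by ring]
      rw [hDf]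
      ring_nf
    -- main sum computation
    refine ⟨fun j => ut j.val, fun j => hutb _, ?_⟩
    have hL : ∑ i, u i * Df y2 i
        = ∑ i ∈ range (m-1), U i * (D1 (2*i)/2 + D1 (2*i+1) + D1 (2*i+2)/2) := by
      rw [← Fin.sum_univ_eq_sum_range (fun i => U i * (D1 (2*i)/2 + D1 (2*i+1) + D1 (2*i+2)/2))]
      exact Finset.sum_congr rfl (fun i _ => hterm i)
    have hR : ∑ j : Fin (2*m-1), ut j.val * Df y1 j = ∑ j ∈ range (2*m), ut j * D1 j := by
      have hsplit : ∑ j ∈ range (2*m), ut j * D1 j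
          = ∑ j ∈ range (2*m-1), ut j * D1 j + ut (2*m-1) * D1 (2*m-1) := by
        conv_lhs => rw [show 2*m = (2*m-1)+1 by omega]
        rw [Finset.sum_range_succ]
      have hz : D1 (2*m-1) = 0 := by simp [hD1def]
      rw [hsplit, hz, mul_zero, add_zero]
      rw [← Fin.sum_univ_eq_sum_range (fun j => ut j * D1 j)]
      apply Finset.sum_congr rfl
      intro j _
      have hjv : j.val < 2*m - 1 := j.isLt
      simp [hD1def, hjv]
    rw [hL, hR, sum_range_two_mul']
    have step : ∀ i ∈ range m, ut (2*i) * D1 (2*i) + ut (2*i+1) * D1 (2*i+1)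
        = (if i = 0 then (0:ℝ) else U (i-1)) * D1 (2*i)/2 + U i * D1 (2*i)/2
          + U i * D1 (2*i+1) := by
      intro i _
      have h2 : ¬((2*i) % 2 = 1) := by omega
      have h3 : (2*i+1) % 2 = 1 := by omega
      have h4 : (2*i)/2 = i := by omega
      have h5 : (2*i+1)/2 = i := by omega
      have h6 : (2*i = 0) = (i = 0) := by simp
      simp only [hutdef, if_neg h2, if_pos h3, h4, h5, h6]
      split <;> ring
    rw [Finset.sum_congr rfl step]
    obtain ⟨mm, rfl⟩ : ∃ mm, m = mm + 1 := ⟨m-1, by omega⟩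
    rw [Finset.sum_add_distrib, Finset.sum_add_distrib]
    have hA : ∑ i ∈ range (mm+1), (if i = 0 then (0:ℝ) else U (i-1)) * D1 (2*i)/2
        = ∑ i ∈ range mm, U i * D1 (2*i+2)/2 := by
      rw [Finset.sum_range_succ']
      have h0 : (if (0:ℕ) = 0 then (0:ℝ) else U (0-1)) * D1 (2*0)/2 = 0 := by simp
      rw [h0, add_zero]
      apply Finset.sum_congr rfl
      intro i _
      rw [if_neg (Nat.succ_ne_zero i), Nat.add_sub_cancel, show 2*(i+1) = 2*i+2 by ring]
    have hUm : U mm = 0 := by simp [hUdef]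
    have hB : ∑ i ∈ range (mm+1), U i * D1 (2*i)/2 = ∑ i ∈ range mm, U i * D1 (2*i)/2 := by
      rw [Finset.sum_range_succ, hUm]; simp
    have hC : ∑ i ∈ range (mm+1), U i * D1 (2*i+1) = ∑ i ∈ range mm, U i * D1 (2*i+1) := by
      rw [Finset.sum_range_succ, hUm]; simp
    rw [hA, hB, hC, ← Finset.sum_add_distrib, ← Finset.sum_add_distrib]
    apply Finset.sum_congr rfl
    intro i _
    ring
  refine ⟨key, ?_⟩
  obtain ⟨ut, hutb, heq⟩ := key (fun i => if 0 ≤ Df y2 i then 1 else -1)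
    (fun i => by by_cases h0 : 0 ≤ Df y2 i <;> simp [h0])
  have h1 : l1 (Df y2) = ∑ i, (if 0 ≤ Df y2 i then (1:ℝ) else -1) * Df y2 i := by
    unfold l1
    apply Finset.sum_congr rfl
    intro i _
    split
    · rw [abs_of_nonneg (by assumption), one_mul]
    · rw [abs_of_neg (by linarith [lt_of_not_ge (by assumption : ¬ 0 ≤ Df y2 i)])]
      ring
  have heq' : l1 (Df y2) = ∑ j, ut j * Df y1 j := by rw [h1]; exact heq
  rw [heq']
  calc ∑ j, ut j * Df y1 j ≤ ∑ j, |Df y1 j| := by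
        apply Finset.sum_le_sum
        intro j _
        calc ut j * Df y1 j ≤ |ut j * Df y1 j| := le_abs_self _
          _ = |ut j| * |Df y1 j| := abs_mul _ _
          _ ≤ 1 * |Df y1 j| := by
              apply mul_le_mul_of_nonneg_right (hutb j) (abs_nonneg _)
          _ = |Df y1 j| := one_mul _
    _ = l1 (Df y1) := rfl
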